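/- For arbitrary real sequences a = (a_1, a_2, ...) and e = (e_1, e_2, ...), let s^{a,e}(m,k) denote the (m,k) entry of the inverse of the lower-triangular matrix [S^{a,e}(m,k)]_{m,k=0}^n (for any n ≥ m, k; the entry does not depend on n). Then for all m ≥ k ≥ 0, (-1)^{m-k} s^{a,e}(m,k) = ∑_{S} ∏_{i=1}^{m-k} (a_{s_i} - e_{s_i - i + 1}), where the sum is over all subsets S = {s_1, ..., s_{m-k}} of {1, ..., m} with s_1 < s_2 < ... < s_{m-k}. -/

import Mathlib

open Polynomial Finset

/-- The numbers `S^{a,e}(m,k)` (0-indexed: `a i`, `e i` denote `a_{i+1}`, `e_{i+1}`),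
uniquely determined by `∏_{i=1}^m (x - e_i) = ∑_{k=0}^m S^{a,e}(m,k) ∏_{i=1}^k (x - a_i)`
together with `S^{a,e}(m,k) = 0` for `k > m`. -/
def SaeRel (a e : ℕ → ℝ) (S : ℕ → ℕ → ℝ) : Prop :=
  (∀ m k : ℕ, m < k → S m k = 0) ∧
  ∀ m : ℕ, ∏ i ∈ Finset.range m, (X - C (e i)) =
    ∑ k ∈ Finset.range (m + 1), C (S m k) * ∏ i ∈ Finset.range k, (X - C (a i))

/-- The cap-index function for restricted growth: `rgsF a e i` is the (0-indexed)
index of the cap for `e i`; the cap for `e 0` is `a 0`, and the cap index increments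
exactly when equality with the cap holds. -/
noncomputable def rgsF (a e : ℕ → ℝ) : ℕ → ℕ
  | 0 => 0
  | i + 1 => if e i = a (rgsF a e i) then rgsF a e i + 1 else rgsF a e i

/-- `e` is a restricted growth sequence relative to `a`. -/
def IsRGS (a e : ℕ → ℝ) : Prop := ∀ i : ℕ, e i ≤ a (rgsF a e i)

/-- An infinite matrix (rows and columns indexed by `ℕ`) is totally non-negative if
every minor is non-negative. -/
def TotallyNonneg (M : ℕ → ℕ → ℝ) : Prop :=
  ∀ (p : ℕ) (r c : Fin p → ℕ), StrictMono r → StrictMono c →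
    0 ≤ (Matrix.of fun i j => M (r i) (c j)).det

/-!
Write `P_k = ∏_{i<k} (X - a_i)` and `Q_k = ∏_{i<k} (X - e_i)`. Multiplying an expansion
`P_m = ∑_k c_{m,k} Q_k` by `X - a_m` and using `(X - a_m) Q_k = Q_{k+1} + (e_k - a_m) Q_k` gives
a two-term recurrence for the coefficients. The sum over strictly increasing sequences satisfies
the same recurrence, by splitting the sequences in `{0, …, m}` according to whether they end
in `m`. So `P_m = ∑_k c_{m,k} Q_k` with `c_{m,k}` the claimed closed form, and since the `Q_k`
have pairwise distinct degrees they are linearly independent; comparing coefficients in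
`Q_m = ∑_j S(m,j) P_j = ∑_k (S c)_{m,k} Q_k` shows that `c` is the inverse of `S`.
-/

abbrev StrictSeq (d m : ℕ) := {s : Fin d → Fin m // ∀ i j, i < j → s i < s j}

namespace StrictSeq

variable {d m : ℕ}

def castSucc (s : StrictSeq d m) : StrictSeq d (m + 1) :=
  ⟨fun i => (s.1 i).castSucc, fun i j h => Fin.castSucc_lt_castSucc_iff.mpr (s.2 i j h)⟩

def snocLast (s : StrictSeq d m) : StrictSeq (d + 1) (m + 1) :=
  ⟨Fin.snoc (castSucc s).1 (Fin.last m), fun i j h => by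
    obtain ⟨i, rfl⟩ := Fin.exists_castSucc_eq.mpr (Fin.ne_last_of_lt h)
    induction j using Fin.lastCases with
    | last => simp [castSucc]
    | cast j => simpa using (castSucc s).2 i j (Fin.castSucc_lt_castSucc_iff.mp h)⟩

lemma castSucc_ne_snocLast (s : StrictSeq (d + 1) m) (t : StrictSeq d m) :
    castSucc s ≠ snocLast t := fun h => by
  simpa [castSucc, snocLast] using
    congrArg (fun u : StrictSeq (d + 1) (m + 1) => u.1 (Fin.last d)) h

lemma castSucc_injective : Function.Injective (castSucc : StrictSeq d m → _) :=
  fun _ _ h => Subtype.ext <| funext fun i =>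
    Fin.castSucc_injective m (congrArg (fun u : StrictSeq d (m + 1) => u.1 i) h)

lemma snocLast_injective : Function.Injective (snocLast : StrictSeq d m → _) :=
  fun _ _ h => Subtype.ext <| funext fun i => Fin.castSucc_injective m <| by
    simpa [snocLast, castSucc] using
      congrArg (fun u : StrictSeq (d + 1) (m + 1) => u.1 i.castSucc) h

lemma range_castSucc_union_range_snocLast :
    Set.range (castSucc : StrictSeq (d + 1) m → _) ∪
      Set.range (snocLast : StrictSeq d m → _) = Set.univ := by
  refine Set.eq_univ_of_forall fun u => ?_
  by_cases hlast : u.1 (Fin.last d) = Fin.last m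
  · have hlt (i : Fin d) : u.1 i.castSucc < Fin.last m :=
      hlast ▸ u.2 _ _ (Fin.castSucc_lt_last i)
    refine Or.inr ⟨⟨fun i => (u.1 i.castSucc).castLT (hlt i), fun i j h => u.2 _ _ h⟩, ?_⟩
    ext i : 2
    induction i using Fin.lastCases with
    | last => simp [snocLast, hlast]
    | cast i => simp [snocLast, castSucc]
  · have hlt (i : Fin (d + 1)) : u.1 i < Fin.last m :=
      (StrictMono.monotone (fun i j h => u.2 i j h) (Fin.le_last i)).trans_lt
        (Fin.lt_last_iff_ne_last.mpr hlast)
    exact Or.inl ⟨⟨fun i => (u.1 i).castLT (hlt i), fun i j h => u.2 _ _ h⟩,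
      by ext; simp [castSucc]⟩

lemma sumElim_bijective :
    Function.Bijective (Sum.elim (castSucc : StrictSeq (d + 1) m → _) snocLast) :=
  ⟨castSucc_injective.sumElim snocLast_injective castSucc_ne_snocLast, by
    rw [← Set.range_eq_univ, Set.Sum.elim_range, range_castSucc_union_range_snocLast]⟩

end StrictSeq

section ShiftedElemSymm

variable {R : Type*} [CommRing R] (a e : ℕ → R)

-- For `e = 0` this is the elementary symmetric polynomial `e_d(a_0, …, a_{m-1})`.
noncomputable def shiftedElemSymm (m d : ℕ) : R :=
  ∑ s : StrictSeq d m, ∏ i : Fin d, (a (s.1 i : ℕ) - e ((s.1 i : ℕ) - (i : ℕ)))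

@[simp]
lemma shiftedElemSymm_zero_right (m : ℕ) : shiftedElemSymm a e m 0 = 1 := by
  have : Unique (StrictSeq 0 m) :=
    ⟨⟨⟨Fin.elim0, fun i => i.elim0⟩⟩, fun _ => Subtype.ext (funext fun i => i.elim0)⟩
  simp [shiftedElemSymm]

lemma shiftedElemSymm_of_lt {m d : ℕ} (h : m < d) : shiftedElemSymm a e m d = 0 := by
  have : IsEmpty (StrictSeq d m) := ⟨fun s => by
    simpa [h.not_ge] using
      Fintype.card_le_of_injective s.1 (StrictMono.injective fun i j hij => s.2 i j hij)⟩
  simp [shiftedElemSymm]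

lemma shiftedElemSymm_succ_succ (m d : ℕ) :
    shiftedElemSymm a e (m + 1) (d + 1) =
      shiftedElemSymm a e m (d + 1) + (a m - e (m - d)) * shiftedElemSymm a e m d := by
  rw [shiftedElemSymm, ← Fintype.sum_bijective _ StrictSeq.sumElim_bijective _ _ fun _ => rfl,
    Fintype.sum_sum_type, shiftedElemSymm, shiftedElemSymm, mul_sum]
  congr 1
  refine sum_congr rfl fun s _ => ?_
  simp [Fin.prod_univ_castSucc, StrictSeq.snocLast, StrictSeq.castSucc, mul_comm]

end ShiftedElemSymm

section Expansion

variable {R : Type*} [CommRing R]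

lemma prod_range_X_sub_C_mul (b : ℕ → R) (k : ℕ) (c : R) :
    (∏ i ∈ range k, (X - C (b i))) * (X - C c) =
      ∏ i ∈ range (k + 1), (X - C (b i)) + C (b k - c) * ∏ i ∈ range k, (X - C (b i)) := by
  rw [prod_range_succ, map_sub]
  ring

lemma prod_range_X_sub_C_eq_sum (a e : ℕ → R) (m : ℕ) :
    ∏ i ∈ range m, (X - C (a i)) =
      ∑ d ∈ range (m + 1),
        C ((-1) ^ d * shiftedElemSymm a e m d) * ∏ i ∈ range (m - d), (X - C (e i)) := by
  induction m with
  | zero => simp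
  | succ m ih =>
    have hshift : ∑ d ∈ range (m + 1),
        C ((-1) ^ d * shiftedElemSymm a e m d) * ∏ i ∈ range (m - d + 1), (X - C (e i)) =
        ∑ d ∈ range (m + 1),
          C ((-1) ^ (d + 1) * shiftedElemSymm a e m (d + 1)) *
            ∏ i ∈ range (m - d), (X - C (e i)) +
        ∏ i ∈ range (m + 1), (X - C (e i)) := by
      rw [sum_range_succ', sum_range_succ _ m, shiftedElemSymm_of_lt a e (Nat.lt_succ_self m)]
      refine congrArg₂ (· + ·) ?_ (by simp)
      simp only [mul_zero, map_zero, zero_mul, add_zero]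
      refine sum_congr rfl fun d hd => ?_
      rw [show m - d = m - (d + 1) + 1 by grind]
    rw [prod_range_succ, ih, sum_mul]
    simp_rw [mul_assoc, prod_range_X_sub_C_mul, mul_add, sum_add_distrib, hshift,
      sum_range_succ' _ (m + 1), shiftedElemSymm_succ_succ]
    simp only [Nat.add_sub_add_right, pow_zero, shiftedElemSymm_zero_right, mul_one, map_one,
      one_mul, Nat.sub_zero]
    rw [add_right_comm, ← sum_add_distrib]
    congr 1
    refine sum_congr rfl fun d _ => ?_
    simp only [map_mul, map_pow, map_neg, map_one, map_sub, map_add]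
    ring

noncomputable def connectionCoeff (a e : ℕ → R) (m k : ℕ) : R :=
  if k ≤ m then (-1) ^ (m - k) * shiftedElemSymm a e m (m - k) else 0

lemma sum_range_eq_of_eq_zero_of_lt {M : Type*} [AddCommMonoid M] {f : ℕ → M} {m L : ℕ}
    (hmL : m < L) (hf : ∀ k, m < k → f k = 0) :
    ∑ k ∈ range (m + 1), f k = ∑ k ∈ range L, f k :=
  sum_subset (range_subset_range.2 hmL) fun k _ hk => hf k (by simpa using hk)

lemma prod_range_X_sub_C_eq_sum_connectionCoeff (a e : ℕ → R) {m L : ℕ} (hmL : m < L) :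
    ∏ i ∈ range m, (X - C (a i)) =
      ∑ k ∈ range L, C (connectionCoeff a e m k) * ∏ i ∈ range k, (X - C (e i)) := by
  rw [prod_range_X_sub_C_eq_sum a e, ← sum_range_reflect,
    ← sum_range_eq_of_eq_zero_of_lt hmL fun k hk => by simp [connectionCoeff, hk.not_ge]]
  refine sum_congr rfl fun k hk => ?_
  have hkm : k ≤ m := Nat.lt_succ_iff.mp (mem_range.mp hk)
  simp [connectionCoeff, hkm, Nat.sub_sub_self hkm]

end Expansion

theorem LinearIndependent.mul_eq_one_of_sum_smul {ι R M : Type*} [Fintype ι] [DecidableEq ι]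
    [Ring R] [AddCommGroup M] [Module R M] {P Q : ι → M} (hQ : LinearIndependent R Q)
    {A B : Matrix ι ι R} (hA : ∀ i, Q i = ∑ j, A i j • P j)
    (hB : ∀ j, P j = ∑ k, B j k • Q k) :
    A * B = 1 := by
  ext i k
  refine hQ.eq_coords_of_eq (f := fun k => (A * B) i k) (g := fun k => (1 : Matrix ι ι R) i k)
    ?_ k
  simp only [Matrix.mul_apply, sum_smul, Matrix.one_apply, ite_smul, one_smul, zero_smul,
    sum_ite_eq, mem_univ, if_true]
  rw [sum_comm, hA]
  simp_rw [hB, smul_sum, smul_smul]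

lemma linearIndependent_prod_range_X_sub_C {R : Type*} [CommRing R] [IsDomain R] (b : ℕ → R) :
    LinearIndependent R fun k => ∏ i ∈ range k, (X - C (b i)) :=
  Polynomial.Sequence.linearIndependent
    ⟨fun k => ∏ i ∈ range k, (X - C (b i)), fun k => by
      rw [← Lagrange.nodal_eq, Lagrange.degree_nodal, card_range]⟩

lemma mul_connectionCoeff_eq_one {a e : ℕ → ℝ} {S : ℕ → ℕ → ℝ} (hS : SaeRel a e S) (n : ℕ) :
    (Matrix.of fun i j : Fin (n + 1) => S i j) *
      Matrix.of (fun i j : Fin (n + 1) => connectionCoeff a e i j) = 1 := by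
  have hQ := (linearIndependent_prod_range_X_sub_C e).comp _ (Fin.val_injective (n := n + 1))
  refine hQ.mul_eq_one_of_sum_smul (P := fun j : Fin (n + 1) => ∏ i ∈ range j, (X - C (a i)))
    (fun i => ?_) (fun j => ?_)
  · simp only [Matrix.of_apply, Function.comp_apply, smul_eq_C_mul]
    rw [hS.2, Fin.sum_univ_eq_sum_range (fun j => C (S i j) * ∏ l ∈ range j, (X - C (a l))),
      sum_range_eq_of_eq_zero_of_lt i.isLt fun j hj => by simp [hS.1 i j hj]]
  · simp only [Matrix.of_apply, Function.comp_apply, smul_eq_C_mul]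
    rw [Fin.sum_univ_eq_sum_range
        (fun k => C (connectionCoeff a e j k) * ∏ l ∈ range k, (X - C (e l))),
      prod_range_X_sub_C_eq_sum_connectionCoeff a e j.isLt]

/-- With `s^{a,e}(m,k)` the `(m,k)` entry of the inverse of the lower-triangular
matrix `[S^{a,e}(m,k)]_{m,k=0}^n` (any `n ≥ m`), one has
`(-1)^{m-k} s^{a,e}(m,k) = ∑_{1 ≤ s_1 < ⋯ < s_{m-k} ≤ m} ∏_{i=1}^{m-k} (a_{s_i} - e_{s_i-i+1})`,
the strictly increasing sequences being encoded (0-indexed) as strictly monotone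
functions `Fin (m-k) → Fin m`. -/
theorem stmt9 (a e : ℕ → ℝ) (S : ℕ → ℕ → ℝ) (hS : SaeRel a e S)
    (n m k : ℕ) (hkm : k ≤ m) (hmn : m ≤ n) :
    (-1 : ℝ) ^ (m - k) *
      (Matrix.of fun i j : Fin (n + 1) => S i j)⁻¹
        ⟨m, Nat.lt_succ_of_le hmn⟩ ⟨k, Nat.lt_succ_of_le (hkm.trans hmn)⟩ =
    ∑ s : {s : Fin (m - k) → Fin m // ∀ i j, i < j → s i < s j},
      ∏ i : Fin (m - k), (a (s.1 i : ℕ) - e ((s.1 i : ℕ) - (i : ℕ))) := by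
  rw [Matrix.inv_eq_right_inv (mul_connectionCoeff_eq_one hS n), Matrix.of_apply,
    connectionCoeff, if_pos hkm, ← mul_assoc, ← mul_pow, neg_one_mul, neg_neg, one_pow, one_mul]
  rfl
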